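/- arXiv:2505.19929 — 3 statements merged into one kernel-verified Lean document; each statement's English description precedes it below -/
import Mathlib

section
/- Let E be a real Banach space, let P : E →L[ℝ] E be a continuous linear map satisfying P ∘ P = P, and let g : E → E be any map. Let t₀ ≤ t₁ and let y : ℝ → E be differentiable on [t₀, t₁] with derivative y'(t) = P (g (y t)) for every t ∈ [t₀, t₁]. If P (y t₀) = y t₀, then P (y t) = y t for every t ∈ [t₀, t₁]. (This is the paper's Lemma stating that the solution of the ℓ-step of the projector-splitting/GAP algorithm remains in the span of the fixed basis X₀.) -/
/-! The complementary projection `1 - P` annihilates the vector field `P ∘ g`, so `(1 - P) ∘ y`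
has zero derivative on `[t₀, t₁]` and keeps its initial value `0`. -/

open Set

theorem ContinuousLinearMap.apply_eq_of_hasDerivAt_mem_ker
    {E F : Type*} [NormedAddCommGroup E] [NormedSpace ℝ E]
    [NormedAddCommGroup F] [NormedSpace ℝ F]
    (L : E →L[ℝ] F) {f f' : ℝ → E} {a b : ℝ}
    (hf : ∀ t ∈ Icc a b, HasDerivAt f (f' t) t) (hker : ∀ t ∈ Icc a b, L (f' t) = 0) :
    ∀ t ∈ Icc a b, L (f t) = L (f a) := by
  have hLf : ∀ t ∈ Icc a b, HasDerivAt (fun s => L (f s)) 0 t := fun t ht =>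
    hker t ht ▸ L.hasFDerivAt.comp_hasDerivAt t (hf t ht)
  exact constant_of_has_deriv_right_zero
    (fun t ht => (hLf t ht).continuousAt.continuousWithinAt)
    (fun t ht => (hLf t (Ico_subset_Icc_self ht)).hasDerivWithinAt)

theorem gap_ell_step_stays_in_span_general
    {E : Type*} [NormedAddCommGroup E] [NormedSpace ℝ E]
    (P : E →L[ℝ] E) (hP : ∀ x, P (P x) = P x) (g : E → E)
    (t₀ t₁ : ℝ) (y : ℝ → E)
    (hy : ∀ t ∈ Set.Icc t₀ t₁, HasDerivAt y (P (g (y t))) t)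
    (h0 : P (y t₀) = y t₀) :
    ∀ t ∈ Set.Icc t₀ t₁, P (y t) = y t := by
  have hker : ∀ x, (1 - P) (P x) = 0 := fun x => by simp [hP]
  have hconst := (1 - P).apply_eq_of_hasDerivAt_mem_ker hy fun t _ => hker (g (y t))
  intro t ht
  exact (sub_eq_zero.mp (by simpa [h0] using hconst t ht)).symm

/-- The solution of the ℓ-step of the projector-splitting/GAP algorithm remains in the
span of the fixed basis: if `P` is an idempotent continuous linear map (a projection)
and `y` solves `∂ₜ y = P (g (y t))` on `[t₀, t₁]` with `P (y t₀) = y t₀`, then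
`P (y t) = y t` for all `t ∈ [t₀, t₁]`. -/
theorem gap_ell_step_stays_in_span
    {E : Type*} [NormedAddCommGroup E] [NormedSpace ℝ E] [CompleteSpace E]
    (P : E →L[ℝ] E) (hP : ∀ x, P (P x) = P x) (g : E → E)
    (t₀ t₁ : ℝ) (ht : t₀ ≤ t₁) (y : ℝ → E)
    (hy : ∀ t ∈ Set.Icc t₀ t₁, HasDerivAt y (P (g (y t))) t)
    (h0 : P (y t₀) = y t₀) :
    ∀ t ∈ Set.Icc t₀ t₁, P (y t) = y t :=
  gap_ell_step_stays_in_span_general P hP g t₀ t₁ y hy h0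
end

section
/- Let H be a real Hilbert space, K a closed subspace of H, and P : H →L[ℝ] H the orthogonal projection onto K. Let 𝓛 : H → H satisfy ‖𝓛 u − 𝓛 v‖ ≤ C·‖u − v‖ for all u, v ∈ H and ‖𝓛 u‖ ≤ B for all u ∈ H, with constants B, C ≥ 0. Let t₀ ≤ t₁ and let f, y : ℝ → H be differentiable on [t₀, t₁] with f'(t) = 𝓛 (f t) and y'(t) = P (𝓛 (y t)) for all t ∈ [t₀, t₁], and with y(t₀) = P (f t₀). Then ‖P (f t₁) − y t₁‖ ≤ C · exp(C·(t₁ − t₀)) · ( (t₁ − t₀)·‖f t₁ − P (f t₁)‖ + B·(t₁ − t₀)² ). (Core defect/Grönwall estimate in the proof of the GAP local error theorem: the Galerkin solution on the fixed subspace K tracks the projection of the exact solution up to the accumulated projection error.) -/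
/-!
The difference `g = P f - y` vanishes at `t₀` and has derivative `P 𝓛(f) - P 𝓛(y)`. Since `P`
is a contraction and `𝓛` is `C`-Lipschitz, `‖g'‖ ≤ C ‖f - y‖ ≤ C ‖g‖ + C ‖f - P f‖`. The
projection error `f - P f` has derivative `(1 - P) 𝓛(f)` of norm at most `B`, so on `[t₀, t₁]`
it stays within `B (t₁ - t₀)` of its final value. Grönwall's inequality with this constant
forcing term, together with `(e^{Cx} - 1) / C ≤ x e^{Cx}`, gives the bound.
-/

open Set

theorem gronwallBound_zero_le_mul_exp {K ε x : ℝ} (hK : 0 ≤ K) (hε : 0 ≤ ε) :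
    gronwallBound 0 K ε x ≤ ε * x * Real.exp (K * x) := by
  rcases hK.eq_or_lt with rfl | hKpos
  · simp [gronwallBound_K0]
  have hexp : Real.exp (K * x) - 1 ≤ K * x * Real.exp (K * x) := by
    have h := mul_le_mul_of_nonneg_right (Real.add_one_le_exp (-(K * x)))
      (Real.exp_pos (K * x)).le
    rw [← Real.exp_add, neg_add_cancel, Real.exp_zero] at h
    linarith
  calc gronwallBound 0 K ε x = ε / K * (Real.exp (K * x) - 1) := by
        rw [gronwallBound_of_K_ne_0 hKpos.ne']; ring
    _ ≤ ε / K * (K * x * Real.exp (K * x)) := by gcongr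
    _ = ε * x * Real.exp (K * x) := by field_simp

section

variable {E : Type*} [NormedAddCommGroup E] [NormedSpace ℝ E]

theorem norm_le_mul_exp_of_norm_deriv_le {g g' : ℝ → E} {K ε a b : ℝ}
    (hK : 0 ≤ K) (hε : 0 ≤ ε) (hab : a ≤ b)
    (hg : ∀ t ∈ Icc a b, HasDerivAt g (g' t) t) (ha : g a = 0)
    (bound : ∀ t ∈ Ico a b, ‖g' t‖ ≤ K * ‖g t‖ + ε) :
    ‖g b‖ ≤ ε * (b - a) * Real.exp (K * (b - a)) := by
  have hgronwall := norm_le_gronwallBound_of_norm_deriv_right_le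
    (fun t ht => (hg t ht).continuousAt.continuousWithinAt)
    (fun t ht => (hg t (Ico_subset_Icc_self ht)).hasDerivWithinAt)
    (by rw [ha, norm_zero]) bound b ⟨hab, le_rfl⟩
  exact hgronwall.trans (gronwallBound_zero_le_mul_exp hK hε)

theorem norm_le_norm_add_mul_of_norm_deriv_le {h h' : ℝ → E} {B t b : ℝ} (htb : t ≤ b)
    (hh : ∀ s ∈ Icc t b, HasDerivAt h (h' s) s) (hB : ∀ s ∈ Icc t b, ‖h' s‖ ≤ B) :
    ‖h t‖ ≤ ‖h b‖ + B * (b - t) := by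
  have hdiff : ‖h b - h t‖ ≤ B * (b - t) :=
    norm_image_sub_le_of_norm_deriv_le_segment' (fun s hs => (hh s hs).hasDerivWithinAt)
      (fun s hs => hB s (Ico_subset_Icc_self hs)) b ⟨htb, le_rfl⟩
  calc ‖h t‖ ≤ ‖h b‖ + ‖h b - h t‖ := norm_le_insert (h b) (h t)
    _ ≤ ‖h b‖ + B * (b - t) := by gcongr

end

section

variable {H : Type*} [NormedAddCommGroup H] [InnerProductSpace ℝ H]
  (K : Submodule ℝ H) [K.HasOrthogonalProjection]

theorem Submodule.norm_sub_starProjection_apply_le (x : H) :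
    ‖x - K.starProjection x‖ ≤ ‖x‖ := by
  simpa using Kᗮ.norm_starProjection_apply_le x

theorem Submodule.norm_starProjection_comp_sub_le {L : H → H} {C : ℝ} (hC : 0 ≤ C)
    (hL : ∀ u v, ‖L u - L v‖ ≤ C * ‖u - v‖) (u v : H) :
    ‖K.starProjection (L u) - K.starProjection (L v)‖ ≤
      C * ‖K.starProjection u - v‖ + C * ‖u - K.starProjection u‖ := by
  calc ‖K.starProjection (L u) - K.starProjection (L v)‖
      = ‖K.starProjection (L u - L v)‖ := by rw [map_sub]
    _ ≤ C * ‖u - v‖ := (K.norm_starProjection_apply_le _).trans (hL u v)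
    _ ≤ C * (‖K.starProjection u - v‖ + ‖u - K.starProjection u‖) := by
        gcongr
        exact (norm_sub_le_norm_sub_add_norm_sub _ _ _).trans_eq (add_comm _ _)
    _ = _ := mul_add _ _ _

end

/-- Core defect/Grönwall estimate in the proof of the GAP local error theorem: the
Galerkin solution `y` on the fixed subspace `K` tracks the projection of the exact
solution `f` up to the accumulated projection error. -/
theorem gap_defect_gronwall_estimate
    {H : Type*} [NormedAddCommGroup H] [InnerProductSpace ℝ H]
    (K : Submodule ℝ H) [K.HasOrthogonalProjection]
    (P : H →L[ℝ] H) (hP : ∀ x, P x = (K.orthogonalProjectionOnto x : H))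
    (𝓛 : H → H) (B C : ℝ) (hB : 0 ≤ B) (hC : 0 ≤ C)
    (hLip : ∀ u v, ‖𝓛 u - 𝓛 v‖ ≤ C * ‖u - v‖)
    (hBdd : ∀ u, ‖𝓛 u‖ ≤ B)
    (t₀ t₁ : ℝ) (ht : t₀ ≤ t₁)
    (f y : ℝ → H)
    (hf : ∀ t ∈ Set.Icc t₀ t₁, HasDerivAt f (𝓛 (f t)) t)
    (hy : ∀ t ∈ Set.Icc t₀ t₁, HasDerivAt y (P (𝓛 (y t))) t)
    (hy0 : y t₀ = P (f t₀)) :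
    ‖P (f t₁) - y t₁‖ ≤
      C * Real.exp (C * (t₁ - t₀)) *
        ((t₁ - t₀) * ‖f t₁ - P (f t₁)‖ + B * (t₁ - t₀) ^ 2) := by
  obtain rfl : P = K.starProjection := ContinuousLinearMap.ext hP
  set P := K.starProjection
  have hPf : ∀ t ∈ Icc t₀ t₁, HasDerivAt (fun s => P (f s)) (P (𝓛 (f t))) t :=
    fun t ht' => P.hasFDerivAt.comp_hasDerivAt t (hf t ht')
  have hdefect : ∀ t ∈ Icc t₀ t₁,
      ‖f t - P (f t)‖ ≤ ‖f t₁ - P (f t₁)‖ + B * (t₁ - t₀) := by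
    intro t ht'
    have hsub : Icc t t₁ ⊆ Icc t₀ t₁ := Icc_subset_Icc_left ht'.1
    calc ‖f t - P (f t)‖ ≤ ‖f t₁ - P (f t₁)‖ + B * (t₁ - t) :=
          norm_le_norm_add_mul_of_norm_deriv_le ht'.2
            (fun s hs => (hf s (hsub hs)).sub (hPf s (hsub hs)))
            (fun s _ => (K.norm_sub_starProjection_apply_le _).trans (hBdd _))
      _ ≤ ‖f t₁ - P (f t₁)‖ + B * (t₁ - t₀) := by gcongr; exact ht'.1
  have hε : 0 ≤ C * (‖f t₁ - P (f t₁)‖ + B * (t₁ - t₀)) :=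
    mul_nonneg hC (add_nonneg (norm_nonneg _) (mul_nonneg hB (sub_nonneg.2 ht)))
  have hgronwall := norm_le_mul_exp_of_norm_deriv_le (g := fun t => P (f t) - y t) hC hε ht
    (fun t ht' => (hPf t ht').sub (hy t ht')) (by simp [hy0])
    (fun t ht' => (K.norm_starProjection_comp_sub_le hC hLip _ _).trans
      (by gcongr; exact hdefect t (Ico_subset_Icc_self ht')))
  convert hgronwall using 1
  ring
end

section
/- Let H be a real Hilbert space, K a closed subspace of H, and P : H →L[ℝ] H the orthogonal projection onto K. Let 𝓛 : H → H satisfy ‖𝓛 u − 𝓛 v‖ ≤ C·‖u − v‖ for all u, v ∈ H and ‖𝓛 u‖ ≤ B for all u ∈ H, with constants B, C ≥ 0. Let t₀ ≤ t₁ and let f, y : ℝ → H be differentiable on [t₀, t₁] with f'(t) = 𝓛 (f t) and y'(t) = P (𝓛 (y t)) for all t ∈ [t₀, t₁], and with y(t₀) = P (f t₀). If δ ≥ 0 satisfies ‖f t₁ − P (f t₁)‖ ≤ δ, then ‖y t₁ − f t₁‖ ≤ δ + C · exp(C·(t₁ − t₀)) · ( δ·(t₁ − t₀) + B·(t₁ −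 t₀)² ). (The GAP local error theorem with the sub-optimality of the first-step subspace, established via the PSI local error, abstracted as the hypothesis on δ.) -/
/-!
Compare `y` with the projected exact solution `P f` rather than with `f`. The difference
`g = y - P f` starts at `0` and satisfies `g' = P (𝓛 y - 𝓛 f)`, so that
`‖g'‖ ≤ C ‖y - f‖ ≤ C ‖g‖ + C ‖f - P f‖`. Since `f` moves with speed at most `B` and
`x ↦ x - P x` is `1`-Lipschitz, the distance of `f t` from `K` stays below `δ + B (t₁ - t₀)`,
and Grönwall's inequality bounds `‖g t₁‖`.
-/

open Set Real Submodule

lemma exp_sub_one_le_mul_exp (x : ℝ) : exp x - 1 ≤ x * exp x := by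
  have h : (1 - x) * exp x ≤ exp (-x) * exp x :=
    mul_le_mul_of_nonneg_right (by linarith [add_one_le_exp (-x)]) (exp_pos x).le
  rw [← exp_add, neg_add_cancel, exp_zero] at h
  linarith

lemma gronwallBound_le_mul_exp {δ K ε x : ℝ} (hK : 0 ≤ K) (hε : 0 ≤ ε) :
    gronwallBound δ K ε x ≤ (δ + ε * x) * exp (K * x) := by
  rcases hK.eq_or_lt with rfl | hK
  · simp [gronwallBound_K0]
  · rw [gronwallBound_of_K_ne_0 hK.ne']
    have : ε / K * (exp (K * x) - 1) ≤ ε * x * exp (K * x) := by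
      calc ε / K * (exp (K * x) - 1) ≤ ε / K * (K * x * exp (K * x)) := by
            gcongr; exact exp_sub_one_le_mul_exp _
        _ = ε * x * exp (K * x) := by field_simp
    linarith

section Galerkin

variable {H : Type*} [NormedAddCommGroup H] [InnerProductSpace ℝ H]
  (K : Submodule ℝ H) [K.HasOrthogonalProjection]

lemma norm_sub_starProjection_le_add (x z : H) :
    ‖z - K.starProjection z‖ ≤ ‖x - K.starProjection x‖ + ‖z - x‖ := by
  simp_rw [← starProjection_orthogonal_val]
  calc ‖Kᗮ.starProjection z‖ = ‖Kᗮ.starProjection x + Kᗮ.starProjection (z - x)‖ := by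
        rw [← map_add, add_sub_cancel]
    _ ≤ ‖Kᗮ.starProjection x‖ + ‖z - x‖ :=
        norm_add_le_of_le le_rfl (Kᗮ.norm_starProjection_apply_le _)

theorem norm_galerkin_sub_starProjection_le {𝓛 : H → H} {C η t₀ t₁ : ℝ} {f y : ℝ → H}
    (hC : 0 ≤ C) (hLip : ∀ u v, ‖𝓛 u - 𝓛 v‖ ≤ C * ‖u - v‖)
    (hf : ∀ t ∈ Icc t₀ t₁, HasDerivAt f (𝓛 (f t)) t)
    (hy : ∀ t ∈ Icc t₀ t₁, HasDerivAt y (K.starProjection (𝓛 (y t))) t)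
    (hy0 : y t₀ = K.starProjection (f t₀))
    (hdefect : ∀ t ∈ Icc t₀ t₁, ‖f t - K.starProjection (f t)‖ ≤ η) :
    ∀ t ∈ Icc t₀ t₁, ‖y t - K.starProjection (f t)‖ ≤ gronwallBound 0 C (C * η) (t - t₀) := by
  set P := K.starProjection
  have hg : ∀ t ∈ Icc t₀ t₁, HasDerivAt (fun t => y t - P (f t)) (P (𝓛 (y t) - 𝓛 (f t))) t :=
    fun t ht => map_sub P _ _ ▸ (hy t ht).sub (P.hasFDerivAt.comp_hasDerivAt t (hf t ht))
  refine norm_le_gronwallBound_of_norm_deriv_right_le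
    (fun t ht => (hg t ht).continuousAt.continuousWithinAt)
    (fun t ht => (hg t (Ico_subset_Icc_self ht)).hasDerivWithinAt) (by simp [hy0]) ?_
  intro t ht
  have hyf : ‖y t - f t‖ ≤ ‖y t - P (f t)‖ + η := by
    calc ‖y t - f t‖ ≤ ‖y t - P (f t)‖ + ‖P (f t) - f t‖ :=
          norm_sub_le_norm_sub_add_norm_sub _ _ _
      _ ≤ ‖y t - P (f t)‖ + η := by
          rw [norm_sub_rev (P (f t))]; gcongr; exact hdefect t (Ico_subset_Icc_self ht)
  calc ‖P (𝓛 (y t) - 𝓛 (f t))‖ ≤ ‖𝓛 (y t) - 𝓛 (f t)‖ := K.norm_starProjection_apply_le _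
    _ ≤ C * ‖y t - f t‖ := hLip _ _
    _ ≤ C * (‖y t - P (f t)‖ + η) := by gcongr
    _ = C * ‖y t - P (f t)‖ + C * η := mul_add _ _ _

end Galerkin

theorem gap_local_error_general
    {H : Type*} [NormedAddCommGroup H] [InnerProductSpace ℝ H]
    (K : Submodule ℝ H) [K.HasOrthogonalProjection]
    (P : H →L[ℝ] H) (hP : ∀ x, P x = (K.orthogonalProjectionOnto x : H))
    (𝓛 : H → H) (B C : ℝ) (hC : 0 ≤ C)
    (hLip : ∀ u v, ‖𝓛 u - 𝓛 v‖ ≤ C * ‖u - v‖)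
    (hBdd : ∀ u, ‖𝓛 u‖ ≤ B)
    (t₀ t₁ : ℝ) (ht : t₀ ≤ t₁)
    (f y : ℝ → H)
    (hf : ∀ t ∈ Set.Icc t₀ t₁, HasDerivAt f (𝓛 (f t)) t)
    (hy : ∀ t ∈ Set.Icc t₀ t₁, HasDerivAt y (P (𝓛 (y t))) t)
    (hy0 : y t₀ = P (f t₀))
    (δ : ℝ) (hproj : ‖f t₁ - P (f t₁)‖ ≤ δ) :
    ‖y t₁ - f t₁‖ ≤
      δ + C * Real.exp (C * (t₁ - t₀)) * (δ * (t₁ - t₀) + B * (t₁ - t₀) ^ 2) := by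
  obtain rfl : P = K.starProjection := ContinuousLinearMap.ext hP
  have hB : 0 ≤ B := (norm_nonneg _).trans (hBdd 0)
  have hδ : 0 ≤ δ := (norm_nonneg _).trans hproj
  have hdrift : ∀ s ∈ Icc t₀ t₁, ‖f s - f t₁‖ ≤ B * (t₁ - t₀) := fun s hs => by
    rw [norm_sub_rev]
    calc ‖f t₁ - f s‖ ≤ B * (t₁ - s) := norm_image_sub_le_of_norm_deriv_le_segment'
          (fun t ht => (hf t ⟨hs.1.trans ht.1, ht.2⟩).hasDerivWithinAt) (fun t _ => hBdd _)
          t₁ (right_mem_Icc.2 hs.2)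
      _ ≤ B * (t₁ - t₀) := by gcongr; exact hs.1
  have hdefect : ∀ s ∈ Icc t₀ t₁, ‖f s - K.starProjection (f s)‖ ≤ δ + B * (t₁ - t₀) :=
    fun s hs => (norm_sub_starProjection_le_add K (f t₁) (f s)).trans
      (add_le_add hproj (hdrift s hs))
  have hgal := norm_galerkin_sub_starProjection_le K hC hLip hf hy hy0 hdefect t₁
    (right_mem_Icc.2 ht)
  calc ‖y t₁ - f t₁‖
        ≤ ‖y t₁ - K.starProjection (f t₁)‖ + ‖f t₁ - K.starProjection (f t₁)‖ := by
        rw [norm_sub_rev (f t₁)]; exact norm_sub_le_norm_sub_add_norm_sub _ _ _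
    _ ≤ (0 + C * (δ + B * (t₁ - t₀)) * (t₁ - t₀)) * exp (C * (t₁ - t₀)) + δ := by
        gcongr
        exact hgal.trans (gronwallBound_le_mul_exp hC (by have := sub_nonneg.2 ht; positivity))
    _ = _ := by ring

/-- The GAP local error theorem, with the sub-optimality of the first-step subspace
abstracted as the hypothesis on `δ`: if the exact solution at time `t₁` is within `δ`
of the fixed subspace `K`, then the Galerkin approximation `y` has local error
`‖y t₁ − f t₁‖ ≤ δ + C e^{C(t₁−t₀)} (δ (t₁−t₀) + B (t₁−t₀)²)`. -/
theorem gap_local_error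
    {H : Type*} [NormedAddCommGroup H] [InnerProductSpace ℝ H]
    (K : Submodule ℝ H) [K.HasOrthogonalProjection]
    (P : H →L[ℝ] H) (hP : ∀ x, P x = (K.orthogonalProjectionOnto x : H))
    (𝓛 : H → H) (B C : ℝ) (hB : 0 ≤ B) (hC : 0 ≤ C)
    (hLip : ∀ u v, ‖𝓛 u - 𝓛 v‖ ≤ C * ‖u - v‖)
    (hBdd : ∀ u, ‖𝓛 u‖ ≤ B)
    (t₀ t₁ : ℝ) (ht : t₀ ≤ t₁)
    (f y : ℝ → H)
    (hf : ∀ t ∈ Set.Icc t₀ t₁, HasDerivAt f (𝓛 (f t)) t)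
    (hy : ∀ t ∈ Set.Icc t₀ t₁, HasDerivAt y (P (𝓛 (y t))) t)
    (hy0 : y t₀ = P (f t₀))
    (δ : ℝ) (hδ : 0 ≤ δ) (hproj : ‖f t₁ - P (f t₁)‖ ≤ δ) :
    ‖y t₁ - f t₁‖ ≤
      δ + C * Real.exp (C * (t₁ - t₀)) * (δ * (t₁ - t₀) + B * (t₁ - t₀) ^ 2) :=
  gap_local_error_general K P hP 𝓛 B C hC hLip hBdd t₀ t₁ ht f y hf hy hy0 δ hproj
end
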